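/- (Diversity order for N = 1.) Let K ≥ 1, I_r ≥ 1, I_d ≥ 1 be integers and μ_r, μ_d, u > 0. For each ρ > 0, on a probability space let W_1^{(ρ)}, …, W_K^{(ρ)} be i.i.d. exponential with rate 1/ρ, X_1, …, X_K i.i.d. Gamma(I_r, μ_r), V_1^{(ρ)}, …, V_K^{(ρ)} i.i.d. exponential with rate 1/ρ, and X_d distributed Gamma(I_d, μ_d), all mutually independent, and let P_out(ρ) = P( for every k with W_k^{(ρ)}/(X_k + 1) ≥ u, one has V_k^{(ρ)} < u (X_d + 1) ). Then lim_{ρ → ∞} ρ^K P_out(ρ) = u^K Σ_{L=0}^{K} C(K, L) (E[X_1 + 1])^{K-L} E[(X_d + 1)^L]; in particular the limit is a finite positive constant, so the outage probability decays as ρ^{-K} (diversity order K). -/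

import Mathlib

open MeasureTheory ProbabilityTheory Real Set Filter Topology

/-!
Given `X_d = y`, the `K` branches are independent, and branch `k` fails with probability
`1 - c(ρ) e^{-u(y+1)/ρ}`, where `c(ρ) = E e^{-u(X_k+1)/ρ} = P(W_k ≥ u(X_k+1))` is the probability
that its first hop succeeds. Hence `P_out(ρ) = E (1 - c(ρ) e^{-u(X_d+1)/ρ})^K`, and
`ρ (1 - c(ρ) e^{-b/ρ}) = E[ρ (1 - e^{-(u(X_k+1)+b)/ρ})]`. For `A ≥ 0` the quantity
`ρ (1 - e^{-A/ρ})` lies in `[0, A]` and tends to `A`, so dominated convergence, applied first in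
`X_k` and then in `X_d`, gives `ρ^K P_out(ρ) → E (u E[X_1+1] + u(X_d+1))^K`. The binomial theorem
turns this into the stated sum, and it is at least `u^K > 0`.
-/

namespace ProbabilityTheory

variable {Ω : Type*} {mΩ : MeasurableSpace Ω} {P : Measure Ω}

lemma iIndepFun.curry {ι κ 𝓧 : Type*} {m𝓧 : MeasurableSpace 𝓧} {X : ι → κ → Ω → 𝓧}
    (mX : ∀ i j, Measurable (X i j)) (h : iIndepFun (fun p : ι × κ ↦ X p.1 p.2) P) :
    iIndepFun (fun i ω j ↦ X i j ω) P := by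
  have := h.isProbabilityMeasure
  have : ∀ i j, IsProbabilityMeasure (P.map (X i j)) :=
    fun i j ↦ Measure.isProbabilityMeasure_map (mX i j).aemeasurable
  have hrow : ∀ i, P.map (fun ω j ↦ X i j ω) = Measure.infinitePi (fun j ↦ P.map (X i j)) :=
    fun i ↦ (h.precomp (Prod.mk_right_injective i)).map_fun_eq_infinitePi_map (fun j ↦ mX i j)
  rw [iIndepFun_iff_map_fun_eq_infinitePi_map (fun i ↦ by fun_prop)]
  simp_rw [hrow]
  have hjoint := h.map_fun_eq_infinitePi_map (fun p : ι × κ ↦ mX p.1 p.2)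
  rw [← Measure.infinitePi_map_curry, ← hjoint, Measure.map_map (by fun_prop) (by fun_prop)]
  rfl

lemma iIndepFun.indepFun_sumElim {ι ι' 𝓧 : Type*} [Fintype ι] [Fintype ι']
    {m𝓧 : MeasurableSpace 𝓧} {f : ι → Ω → 𝓧} {g : ι' → Ω → 𝓧}
    (mf : ∀ i, Measurable (f i)) (mg : ∀ j, Measurable (g j)) (h : iIndepFun (Sum.elim f g) P) :
    IndepFun (fun ω i ↦ f i ω) (fun ω j ↦ g j ω) P := by
  have := h.isProbabilityMeasure
  have mfg : ∀ s, Measurable (Sum.elim f g s) := Sum.rec mf mg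
  rw [indepFun_iff_map_prod_eq_prod_map_map (by fun_prop) (by fun_prop),
    (h.precomp Sum.inl_injective).map_fun_eq_pi_map (fun i ↦ (mf i).aemeasurable),
    (h.precomp Sum.inr_injective).map_fun_eq_pi_map (fun j ↦ (mg j).aemeasurable)]
  have := (measurePreserving_sumPiEquivProdPi (fun s ↦ P.map (Sum.elim f g s))).map_eq
  rw [← h.map_fun_eq_pi_map (fun s ↦ (mfg s).aemeasurable),
    Measure.map_map (by fun_prop) (by fun_prop)] at this
  exact this

end ProbabilityTheory

lemma MeasureTheory.measureReal_prod_apply_symm {α β : Type*} [MeasurableSpace α]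
    [MeasurableSpace β] {μ : Measure α} {ν : Measure β} [IsFiniteMeasure μ] [SFinite ν]
    {s : Set (α × β)} (hs : MeasurableSet s) :
    (μ.prod ν).real s = ∫ y, μ.real ((·, y) ⁻¹' s) ∂ν := by
  rw [measureReal_def, Measure.prod_apply_symm hs, ← integral_toReal
    (measurable_measure_prodMk_right hs).aemeasurable (ae_of_all _ fun _ ↦ measure_lt_top _ _)]
  rfl

lemma integral_add_pow_eq_sum {β : Type*} [MeasurableSpace β] {ν : Measure β} {Z : β → ℝ}
    (c : ℝ) {K : ℕ} (hZ : ∀ L ≤ K, Integrable (fun y ↦ Z y ^ L) ν) :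
    ∫ y, (c + Z y) ^ K ∂ν =
      ∑ L ∈ Finset.range (K + 1), (K.choose L : ℝ) * c ^ (K - L) * ∫ y, Z y ^ L ∂ν := by
  simp_rw [add_comm c, add_pow]
  rw [integral_finsetSum _ fun L hL ↦ ?_]
  · refine Finset.sum_congr rfl fun L _ ↦ ?_
    rw [← integral_const_mul]
    simp_rw [mul_comm, mul_assoc]
  · exact ((hZ L (Nat.lt_succ_iff.1 (Finset.mem_range.1 hL))).mul_const _).mul_const _

lemma integrable_add_pow {β : Type*} [MeasurableSpace β] {ν : Measure β} {Z : β → ℝ}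
    (c : ℝ) {K : ℕ} (hZ : ∀ L ≤ K, Integrable (fun y ↦ Z y ^ L) ν) :
    Integrable (fun y ↦ (c + Z y) ^ K) ν := by
  simp_rw [add_comm c, add_pow]
  exact integrable_finsetSum _ fun L hL ↦
    ((hZ L (Nat.lt_succ_iff.1 (Finset.mem_range.1 hL))).mul_const _).mul_const _

namespace ProbabilityTheory

lemma ae_nonneg_gammaMeasure (a r : ℝ) : ∀ᵐ x ∂gammaMeasure a r, 0 ≤ x := by
  rw [ae_iff]
  simp_rw [not_le]
  exact (withDensity_apply _ measurableSet_Iio).trans (lintegral_gammaPDF_of_nonpos le_rfl)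

lemma integrable_pow_gammaMeasure {a r : ℝ} (ha : 0 < a) (hr : 0 < r) (n : ℕ) :
    Integrable (fun x ↦ x ^ n) (gammaMeasure a r) := by
  rw [gammaMeasure, show gammaPDF a r = fun x ↦ ENNReal.ofReal (gammaPDFReal a r x) from rfl,
    integrable_withDensity_iff (measurable_gammaPDFReal a r).ennreal_ofReal
      (ae_of_all _ fun _ ↦ ENNReal.ofReal_lt_top)]
  simp_rw [ENNReal.toReal_ofReal (gammaPDFReal_nonneg ha hr _)]
  rw [← integrableOn_univ, ← Iio_union_Ici (a := (0 : ℝ)), integrableOn_union,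
    integrableOn_Ici_iff_integrableOn_Ioi]
  constructor
  · refine integrableOn_zero.congr_fun (fun x hx ↦ ?_) measurableSet_Iio
    simp [gammaPDFReal, not_le.2 (mem_Iio.1 hx)]
  · have := (integrableOn_rpow_mul_exp_neg_mul_rpow (s := n + a - 1) (p := 1) (b := r)
      (by linarith [n.cast_nonneg (α := ℝ)]) one_pos hr).const_mul (r ^ a / Gamma a)
    refine IntegrableOn.congr_fun this (fun x (hx : 0 < x) ↦ ?_) measurableSet_Ioi
    simp only [gammaPDFReal, if_pos hx.le, rpow_one, neg_mul]
    rw [add_sub_assoc, rpow_add hx, rpow_natCast]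
    ring

lemma integrable_add_one_pow_gammaMeasure {a r : ℝ} (ha : 0 < a) (hr : 0 < r) (L : ℕ) :
    Integrable (fun x ↦ (x + 1) ^ L) (gammaMeasure a r) := by
  simpa only [add_comm (1 : ℝ)] using
    integrable_add_pow 1 fun n _ ↦ integrable_pow_gammaMeasure ha hr n

lemma measureReal_expMeasure_Ici {r t : ℝ} (hr : 0 < r) (ht : 0 ≤ t) :
    (expMeasure r).real (Ici t) = exp (-(r * t)) := by
  have := isProbabilityMeasure_expMeasure hr
  have hatom : expMeasure r {t} = 0 :=
    withDensity_absolutelyContinuous _ _ (Real.volume_singleton)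
  rw [measureReal_congr (Ioi_ae_eq_Ici' hatom).symm, ← compl_Iic,
    measureReal_compl measurableSet_Iic, probReal_univ, ← cdf_eq_real, cdf_expMeasure_eq hr,
    if_pos ht, sub_sub_cancel]

lemma measureReal_expMeasure_prod_le_div {r u : ℝ} (hr : 0 < r) (hu : 0 ≤ u) {ν : Measure ℝ}
    [IsProbabilityMeasure ν] (hν : ∀ᵐ x ∂ν, 0 ≤ x) :
    ((expMeasure r).prod ν).real {p | u ≤ p.1 / (p.2 + 1)} =
      ∫ x, exp (-(r * (u * (x + 1)))) ∂ν := by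
  have := isProbabilityMeasure_expMeasure hr
  rw [measureReal_prod_apply_symm (measurableSet_le measurable_const (by fun_prop))]
  refine integral_congr_ae ?_
  filter_upwards [hν] with x hx
  have hslice : (·, x) ⁻¹' {p : ℝ × ℝ | u ≤ p.1 / (p.2 + 1)} = Ici (u * (x + 1)) := by
    ext w
    simp [le_div_iff₀ (by linarith : (0 : ℝ) < x + 1)]
  rw [hslice, measureReal_expMeasure_Ici hr (by positivity)]

end ProbabilityTheory

lemma tendsto_mul_one_sub_exp_neg_div (t : ℝ) :
    Tendsto (fun ρ : ℝ ↦ ρ * (1 - exp (-(t / ρ)))) atTop (𝓝 t) := by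
  -- `ρ (1 - e^{-t/ρ})` is the difference quotient at `0` of `s ↦ 1 - e^{-ts}`, taken at `s = ρ⁻¹`
  have hderiv : HasDerivAt (fun s ↦ 1 - exp (-(t * s))) t 0 := by
    simpa using (((hasDerivAt_id (0 : ℝ)).const_mul t).neg.exp).const_sub 1
  refine (hderiv.tendsto_slope_zero_right.comp tendsto_inv_atTop_nhdsGT_zero).congr' ?_
  filter_upwards [eventually_ne_atTop 0] with ρ hρ
  simp [div_eq_mul_inv]

lemma mul_one_sub_exp_neg_div_le {ρ : ℝ} (hρ : 0 < ρ) (t : ℝ) :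
    ρ * (1 - exp (-(t / ρ))) ≤ t := by
  have := one_sub_le_exp_neg (t / ρ)
  calc ρ * (1 - exp (-(t / ρ))) ≤ ρ * (t / ρ) := by gcongr; linarith
    _ = t := mul_div_cancel₀ t hρ.ne'

lemma mul_one_sub_exp_neg_div_nonneg {ρ t : ℝ} (hρ : 0 ≤ ρ) (ht : 0 ≤ t) :
    0 ≤ ρ * (1 - exp (-(t / ρ))) :=
  mul_nonneg hρ (sub_nonneg.2 (exp_le_one_iff.2 (neg_nonpos.2 (div_nonneg ht hρ))))

lemma integral_exp_neg_div_mul_exp_neg_div {α : Type*} [MeasurableSpace α] {ν : Measure α}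
    (a : α → ℝ) (b ρ : ℝ) :
    (∫ x, exp (-(a x / ρ)) ∂ν) * exp (-(b / ρ)) = ∫ x, exp (-((a x + b) / ρ)) ∂ν := by
  rw [← integral_mul_const]
  simp_rw [add_div, neg_add, exp_add]

section ExpTransform

variable {α β : Type*} [MeasurableSpace α] [MeasurableSpace β] {ν : Measure α} {ν' : Measure β}
  [IsProbabilityMeasure ν] {a : α → ℝ}

lemma integrable_exp_neg_div (ha : 0 ≤ᵐ[ν] a) (ham : AEStronglyMeasurable a ν) {ρ : ℝ}
    (hρ : 0 ≤ ρ) : Integrable (fun x ↦ exp (-(a x / ρ))) ν := by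
  refine Integrable.of_bound (C := 1) (by fun_prop) ?_
  filter_upwards [ha] with x hx
  rw [norm_of_nonneg (exp_pos _).le, exp_le_one_iff, neg_nonpos]
  exact div_nonneg hx hρ

lemma mul_one_sub_integral_exp_neg_div (ha : 0 ≤ᵐ[ν] a) (ham : AEStronglyMeasurable a ν)
    {ρ : ℝ} (hρ : 0 ≤ ρ) :
    ρ * (1 - ∫ x, exp (-(a x / ρ)) ∂ν) = ∫ x, ρ * (1 - exp (-(a x / ρ))) ∂ν := by
  rw [integral_const_mul, integral_sub (integrable_const 1) (integrable_exp_neg_div ha ham hρ),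
    integral_const, probReal_univ, one_smul]

lemma mul_one_sub_integral_exp_neg_div_nonneg (ha : 0 ≤ᵐ[ν] a) (ham : AEStronglyMeasurable a ν)
    {ρ : ℝ} (hρ : 0 ≤ ρ) : 0 ≤ ρ * (1 - ∫ x, exp (-(a x / ρ)) ∂ν) := by
  rw [mul_one_sub_integral_exp_neg_div ha ham hρ]
  exact integral_nonneg_of_ae (by filter_upwards [ha] with x hx using
    mul_one_sub_exp_neg_div_nonneg hρ hx)

lemma mul_one_sub_integral_exp_neg_div_le (ha : 0 ≤ᵐ[ν] a) (hai : Integrable a ν)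
    {ρ : ℝ} (hρ : 0 < ρ) : ρ * (1 - ∫ x, exp (-(a x / ρ)) ∂ν) ≤ ∫ x, a x ∂ν := by
  rw [mul_one_sub_integral_exp_neg_div ha hai.1 hρ.le]
  refine integral_mono_of_nonneg ?_ hai (ae_of_all _ fun x ↦ mul_one_sub_exp_neg_div_le hρ (a x))
  filter_upwards [ha] with x hx using mul_one_sub_exp_neg_div_nonneg hρ.le hx

lemma tendsto_mul_one_sub_integral_exp_neg_div (ha : 0 ≤ᵐ[ν] a) (hai : Integrable a ν) :
    Tendsto (fun ρ ↦ ρ * (1 - ∫ x, exp (-(a x / ρ)) ∂ν)) atTop (𝓝 (∫ x, a x ∂ν)) := by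
  have hdom : Tendsto (fun ρ ↦ ∫ x, ρ * (1 - exp (-(a x / ρ))) ∂ν) atTop (𝓝 (∫ x, a x ∂ν)) := by
    refine tendsto_integral_filter_of_dominated_convergence a ?_ ?_ hai
      (ae_of_all _ fun x ↦ tendsto_mul_one_sub_exp_neg_div (a x))
    · exact Eventually.of_forall fun ρ ↦ by have := hai.1; fun_prop
    · filter_upwards [eventually_gt_atTop 0] with ρ hρ
      filter_upwards [ha] with x hx
      rw [norm_of_nonneg (mul_one_sub_exp_neg_div_nonneg hρ.le hx)]
      exact mul_one_sub_exp_neg_div_le hρ (a x)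
  refine hdom.congr' ?_
  filter_upwards [eventually_ge_atTop 0] with ρ hρ
  exact (mul_one_sub_integral_exp_neg_div ha hai.1 hρ).symm

lemma tendsto_integral_pow_mul_one_sub_integral_exp_neg_div {b : β → ℝ}
    (ha : 0 ≤ᵐ[ν] a) (hai : Integrable a ν) (hb : 0 ≤ᵐ[ν'] b) (hbm : AEStronglyMeasurable b ν')
    {K : ℕ} (hbound : Integrable (fun y ↦ (∫ x, a x ∂ν + b y) ^ K) ν') :
    Tendsto (fun ρ ↦ ∫ y, (ρ * (1 - (∫ x, exp (-(a x / ρ)) ∂ν) * exp (-(b y / ρ)))) ^ K ∂ν')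
      atTop (𝓝 (∫ y, (∫ x, a x ∂ν + b y) ^ K ∂ν')) := by
  have hshift : ∀ y, 0 ≤ b y → 0 ≤ᵐ[ν] (fun x ↦ a x + b y) ∧
      Integrable (fun x ↦ a x + b y) ν ∧ ∫ x, (a x + b y) ∂ν = ∫ x, a x ∂ν + b y := fun y hy ↦
    ⟨by filter_upwards [ha] with x hx using add_nonneg hx hy, hai.add (integrable_const _),
      by rw [integral_add hai (integrable_const _), integral_const, probReal_univ, one_smul]⟩
  refine tendsto_integral_filter_of_dominated_convergence _ ?_ ?_ hbound ?_
  · exact Eventually.of_forall fun ρ ↦ by fun_prop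
  · filter_upwards [eventually_gt_atTop 0] with ρ hρ
    filter_upwards [hb] with y hy
    obtain ⟨ha', hai', hint⟩ := hshift y hy
    rw [integral_exp_neg_div_mul_exp_neg_div, ← hint, norm_pow,
      norm_of_nonneg (mul_one_sub_integral_exp_neg_div_nonneg ha' hai'.1 hρ.le)]
    exact pow_le_pow_left₀ (mul_one_sub_integral_exp_neg_div_nonneg ha' hai'.1 hρ.le)
      (mul_one_sub_integral_exp_neg_div_le ha' hai' hρ) K
  · filter_upwards [hb] with y hy
    obtain ⟨ha', hai', hint⟩ := hshift y hy
    simp_rw [integral_exp_neg_div_mul_exp_neg_div, ← hint]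
    exact (tendsto_mul_one_sub_integral_exp_neg_div ha' hai').pow K

end ExpTransform

noncomputable def outageIntegral (νX νd : Measure ℝ) (u : ℝ) (K : ℕ) (ρ : ℝ) : ℝ :=
  ∫ y, (1 - (∫ x, exp (-(u * (x + 1) / ρ)) ∂νX) * exp (-(u * (y + 1) / ρ))) ^ K ∂νd

section OutageIntegral

variable {νX νd : Measure ℝ} {K : ℕ}

lemma tendsto_pow_mul_outageIntegral [IsProbabilityMeasure νX] {u : ℝ} (hu : 0 ≤ u)
    (hνX : ∀ᵐ x ∂νX, 0 ≤ x) (hνd : ∀ᵐ y ∂νd, 0 ≤ y) (hX : Integrable (fun x ↦ x + 1) νX)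
    (hd : ∀ L ≤ K, Integrable (fun y ↦ (y + 1) ^ L) νd) :
    Tendsto (fun ρ ↦ ρ ^ K * outageIntegral νX νd u K ρ) atTop
      (𝓝 (u ^ K * ∑ L ∈ Finset.range (K + 1), (K.choose L : ℝ) *
        (∫ x, (x + 1) ∂νX) ^ (K - L) * ∫ y, (y + 1) ^ L ∂νd)) := by
  set M := ∫ x, (x + 1) ∂νX
  have hfactor : ∀ y, ∫ x, u * (x + 1) ∂νX + u * (y + 1) = u * (M + (y + 1)) :=
    fun y ↦ by rw [integral_const_mul]; ring
  have hlim := tendsto_integral_pow_mul_one_sub_integral_exp_neg_div (K := K)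
    (a := fun x ↦ u * (x + 1)) (b := fun y ↦ u * (y + 1))
    (by filter_upwards [hνX] with x hx; positivity) (hX.const_mul u)
    (by filter_upwards [hνd] with y hy; positivity) (by fun_prop)
    (by simp_rw [hfactor, mul_pow]; exact (integrable_add_pow M hd).const_mul _)
  simp_rw [hfactor, mul_pow, integral_const_mul, integral_add_pow_eq_sum M hd] at hlim
  exact hlim

lemma sum_choose_mul_integral_add_one_pow_pos [IsProbabilityMeasure νd] {M : ℝ} (hM : 0 ≤ M)
    (hνd : ∀ᵐ y ∂νd, 0 ≤ y) (hd : ∀ L ≤ K, Integrable (fun y ↦ (y + 1) ^ L) νd) :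
    0 < ∑ L ∈ Finset.range (K + 1), (K.choose L : ℝ) * M ^ (K - L) * ∫ y, (y + 1) ^ L ∂νd := by
  rw [← integral_add_pow_eq_sum M hd]
  calc (0 : ℝ) < ∫ _, 1 ∂νd := by simp
    _ ≤ ∫ y, (M + (y + 1)) ^ K ∂νd :=
      integral_mono_ae (integrable_const 1) (integrable_add_pow M hd)
        (by filter_upwards [hνd] with y hy using one_le_pow₀ (by linarith))

end OutageIntegral

section Relay

variable {Ω : Type*} {mΩ : MeasurableSpace Ω} {P : Measure Ω} {K : ℕ}

section Independence

variable {𝓧 : Type*} [MeasurableSpace 𝓧] {W X V : Fin K → Ω → 𝓧} {Xd : Ω → 𝓧}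

lemma indepFun_branches_destination (hW : ∀ k, Measurable (W k)) (hX : ∀ k, Measurable (X k))
    (hV : ∀ k, Measurable (V k)) (hXd : Measurable Xd)
    (h : iIndepFun (Sum.elim (Sum.elim W X) (Sum.elim V fun _ : Unit ↦ Xd)) P) :
    IndepFun (fun ω k ↦ ((W k ω, X k ω), V k ω)) Xd P := by
  have hassoc : iIndepFun (Sum.elim (Sum.elim (Sum.elim W X) V) fun _ : Unit ↦ Xd) P := by
    convert h.precomp (Equiv.sumAssoc _ _ _).injective using 1
    ext (((k | k) | k) | _) <;> rfl
  refine (hassoc.indepFun_sumElim (Sum.rec (Sum.rec hW hX) hV) fun _ ↦ hXd).comp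
    (φ := fun y k ↦ ((y (.inl (.inl k)), y (.inl (.inr k))), y (.inr k))) (ψ := fun z ↦ z ())
    (by fun_prop) ?_
  exact measurable_pi_apply ()

lemma iIndepFun_branches (hW : ∀ k, Measurable (W k)) (hX : ∀ k, Measurable (X k))
    (hV : ∀ k, Measurable (V k))
    (h : iIndepFun (Sum.elim (Sum.elim W X) (Sum.elim V fun _ : Unit ↦ Xd)) P) :
    iIndepFun (fun k ω ↦ ((W k ω, X k ω), V k ω)) P := by
  let e : Fin K × Fin 3 → (Fin K ⊕ Fin K) ⊕ (Fin K ⊕ Unit) :=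
    fun p ↦ ![.inl (.inl p.1), .inl (.inr p.1), .inr (.inl p.1)] p.2
  have he : e.Injective := by
    rintro ⟨k, i⟩ ⟨k', i'⟩ hkk
    fin_cases i <;> fin_cases i' <;> simp_all [e]
  have hcurry := (h.precomp he).curry
    (X := fun k i ↦ Sum.elim (Sum.elim W X) (Sum.elim V fun _ : Unit ↦ Xd) (e (k, i)))
    (fun k i ↦ by fin_cases i <;> simp [e, hW, hX, hV])
  exact hcurry.comp (fun _ y ↦ ((y 0, y 1), y 2)) fun _ ↦ by fun_prop

lemma map_branch_eq_prod (hW : ∀ k, Measurable (W k)) (hX : ∀ k, Measurable (X k))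
    (hV : ∀ k, Measurable (V k)) (hXd : Measurable Xd)
    (h : iIndepFun (Sum.elim (Sum.elim W X) (Sum.elim V fun _ : Unit ↦ Xd)) P) (k : Fin K) :
    P.map (fun ω ↦ ((W k ω, X k ω), V k ω)) =
      ((P.map (W k)).prod (P.map (X k))).prod (P.map (V k)) := by
  have := h.isProbabilityMeasure
  have hmeas : ∀ i, Measurable (Sum.elim (Sum.elim W X) (Sum.elim V fun _ : Unit ↦ Xd) i) :=
    Sum.rec (Sum.rec hW hX) (Sum.rec hV fun _ ↦ hXd)
  have hWX : IndepFun (W k) (X k) P :=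
    h.indepFun (i := .inl (.inl k)) (j := .inl (.inr k)) (by simp)
  have hWXV : IndepFun (fun ω ↦ (W k ω, X k ω)) (V k) P :=
    h.indepFun_prodMk hmeas (.inl (.inl k)) (.inl (.inr k)) (.inr (.inl k)) (by simp) (by simp)
  rw [(indepFun_iff_map_prod_eq_prod_map_map (by fun_prop) (hV k).aemeasurable).1 hWXV,
    (indepFun_iff_map_prod_eq_prod_map_map (hW k).aemeasurable (hX k).aemeasurable).1 hWX]

lemma map_branches_destination_eq (hW : ∀ k, Measurable (W k)) (hX : ∀ k, Measurable (X k))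
    (hV : ∀ k, Measurable (V k)) (hXd : Measurable Xd)
    (h : iIndepFun (Sum.elim (Sum.elim W X) (Sum.elim V fun _ : Unit ↦ Xd)) P)
    {μW μX μV μd : Measure 𝓧} (hWlaw : ∀ k, P.map (W k) = μW) (hXlaw : ∀ k, P.map (X k) = μX)
    (hVlaw : ∀ k, P.map (V k) = μV) (hXdlaw : P.map Xd = μd) :
    P.map (fun ω ↦ (fun k ↦ ((W k ω, X k ω), V k ω), Xd ω)) =
      (Measure.pi fun _ : Fin K ↦ (μW.prod μX).prod μV).prod μd := by
  have := h.isProbabilityMeasure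
  rw [(indepFun_iff_map_prod_eq_prod_map_map (by fun_prop) hXd.aemeasurable).1
      (indepFun_branches_destination hW hX hV hXd h),
    (iIndepFun_branches hW hX hV h).map_fun_eq_pi_map fun k ↦ by fun_prop, hXdlaw]
  simp_rw [map_branch_eq_prod hW hX hV hXd h, hWlaw, hXlaw, hVlaw]

end Independence

variable {W X V : Fin K → Ω → ℝ} {Xd : Ω → ℝ}

lemma measureReal_outage_eq (hW : ∀ k, Measurable (W k)) (hX : ∀ k, Measurable (X k))
    (hV : ∀ k, Measurable (V k)) (hXd : Measurable Xd)
    (h : iIndepFun (Sum.elim (Sum.elim W X) (Sum.elim V fun _ : Unit ↦ Xd)) P)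
    {μW μX μV μd : Measure ℝ} [IsProbabilityMeasure μW] [IsProbabilityMeasure μX]
    [IsProbabilityMeasure μV] [IsProbabilityMeasure μd]
    (hWlaw : ∀ k, P.map (W k) = μW) (hXlaw : ∀ k, P.map (X k) = μX)
    (hVlaw : ∀ k, P.map (V k) = μV) (hXdlaw : P.map Xd = μd) (u : ℝ) :
    P.real {ω | ∀ k, u ≤ W k ω / (X k ω + 1) → V k ω < u * (Xd ω + 1)} =
      ∫ y, (1 - (μW.prod μX).real {p | u ≤ p.1 / (p.2 + 1)} * μV.real (Ici (u * (y + 1)))) ^ K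
        ∂μd := by
  have := h.isProbabilityMeasure
  set D : Set (ℝ × ℝ) := {p | u ≤ p.1 / (p.2 + 1)}
  have hD : MeasurableSet D := measurableSet_le measurable_const (by fun_prop)
  set C : Set ((Fin K → (ℝ × ℝ) × ℝ) × ℝ) :=
    {q | ∀ k, (q.1 k).1 ∈ D → (q.1 k).2 < u * (q.2 + 1)}
  have hC : MeasurableSet C := measurableSet_setOfPred.2 (by fun_prop)
  have hslice : ∀ y, (·, y) ⁻¹' C = univ.pi fun _ ↦ (D ×ˢ Ici (u * (y + 1)))ᶜ := by
    intro y
    ext t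
    simp [C, imp_iff_not_or]
  change P.real ((fun ω ↦ (fun k ↦ ((W k ω, X k ω), V k ω), Xd ω)) ⁻¹' C) = _
  rw [← map_measureReal_apply (by fun_prop) hC,
    map_branches_destination_eq hW hX hV hXd h hWlaw hXlaw hVlaw hXdlaw,
    measureReal_prod_apply_symm hC]
  congr 1 with y
  rw [hslice, measureReal_def, Measure.pi_pi, ENNReal.toReal_prod]
  simp_rw [← measureReal_def, measureReal_compl (hD.prod measurableSet_Ici), probReal_univ,
    measureReal_prod_prod, Finset.prod_const, Finset.card_univ, Fintype.card_fin]

lemma measureReal_outage_eq_outageIntegral {ρ u : ℝ} (hρ : 0 < ρ) (hu : 0 ≤ u)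
    (hW : ∀ k, Measurable (W k)) (hX : ∀ k, Measurable (X k))
    (hV : ∀ k, Measurable (V k)) (hXd : Measurable Xd)
    (h : iIndepFun (Sum.elim (Sum.elim W X) (Sum.elim V fun _ : Unit ↦ Xd)) P)
    {νX νd : Measure ℝ} [IsProbabilityMeasure νX] [IsProbabilityMeasure νd]
    (hνX : ∀ᵐ x ∂νX, 0 ≤ x) (hνd : ∀ᵐ y ∂νd, 0 ≤ y)
    (hWlaw : ∀ k, P.map (W k) = expMeasure (1 / ρ)) (hXlaw : ∀ k, P.map (X k) = νX)
    (hVlaw : ∀ k, P.map (V k) = expMeasure (1 / ρ)) (hXdlaw : P.map Xd = νd) :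
    P.real {ω | ∀ k, u ≤ W k ω / (X k ω + 1) → V k ω < u * (Xd ω + 1)} =
      outageIntegral νX νd u K ρ := by
  have hrate : 0 < 1 / ρ := one_div_pos.2 hρ
  have := isProbabilityMeasure_expMeasure hrate
  rw [measureReal_outage_eq hW hX hV hXd h hWlaw hXlaw hVlaw hXdlaw u,
    measureReal_expMeasure_prod_le_div hrate hu hνX]
  refine integral_congr_ae ?_
  filter_upwards [hνd] with y hy
  rw [measureReal_expMeasure_Ici hrate (by positivity)]
  simp_rw [one_div_mul_eq_div]

end Relay

theorem diversity_order_N_eq_one_general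
    {Ω : Type*} [MeasurableSpace Ω] (P : Measure Ω) [IsProbabilityMeasure P]
    (K : ℕ) (Ir : ℕ) (hIr : 1 ≤ Ir) (Id' : ℕ) (hId : 1 ≤ Id')
    (μr μd u : ℝ) (hμr : 0 < μr) (hμd : 0 < μd) (hu : 0 < u)
    (W V : ℝ → Fin K → Ω → ℝ) (X : ℝ → Fin K → Ω → ℝ) (Xd : ℝ → Ω → ℝ)
    (hWmeas : ∀ ρ, 0 < ρ → ∀ k, Measurable (W ρ k))
    (hXmeas : ∀ ρ, 0 < ρ → ∀ k, Measurable (X ρ k))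
    (hVmeas : ∀ ρ, 0 < ρ → ∀ k, Measurable (V ρ k))
    (hXdmeas : ∀ ρ, 0 < ρ → Measurable (Xd ρ))
    (hWdist : ∀ ρ, 0 < ρ → ∀ k, Measure.map (W ρ k) P = expMeasure (1 / ρ))
    (hXdist : ∀ ρ, 0 < ρ → ∀ k, Measure.map (X ρ k) P = gammaMeasure Ir μr)
    (hVdist : ∀ ρ, 0 < ρ → ∀ k, Measure.map (V ρ k) P = expMeasure (1 / ρ))
    (hXddist : ∀ ρ, 0 < ρ → Measure.map (Xd ρ) P = gammaMeasure Id' μd)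
    (hindep : ∀ ρ, 0 < ρ → iIndepFun
      (Sum.elim (Sum.elim (W ρ) (X ρ)) (Sum.elim (V ρ) (fun _ : Unit => Xd ρ))) P) :
    Filter.Tendsto
      (fun ρ : ℝ => ρ ^ K *
        (P {ω | ∀ k, u ≤ W ρ k ω / (X ρ k ω + 1) → V ρ k ω < u * (Xd ρ ω + 1)}).toReal)
      Filter.atTop
      (nhds (u ^ K * ∑ L ∈ Finset.range (K + 1), (K.choose L : ℝ) *
        (∫ x, (x + 1) ∂gammaMeasure Ir μr) ^ (K - L) *
          ∫ x, (x + 1) ^ L ∂gammaMeasure Id' μd)) ∧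
    0 < u ^ K * ∑ L ∈ Finset.range (K + 1), (K.choose L : ℝ) *
        (∫ x, (x + 1) ∂gammaMeasure Ir μr) ^ (K - L) *
          ∫ x, (x + 1) ^ L ∂gammaMeasure Id' μd := by
  have hIr_pos : (0 : ℝ) < Ir := by exact_mod_cast hIr
  have hId_pos : (0 : ℝ) < Id' := by exact_mod_cast hId
  have := isProbabilityMeasure_gammaMeasure hIr_pos hμr
  have := isProbabilityMeasure_gammaMeasure hId_pos hμd
  have hXr_nonneg := ae_nonneg_gammaMeasure (Ir : ℝ) μr
  have hXd_nonneg := ae_nonneg_gammaMeasure (Id' : ℝ) μd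
  have hmoments : ∀ L ≤ K, Integrable (fun y ↦ (y + 1) ^ L) (gammaMeasure Id' μd) :=
    fun L _ ↦ integrable_add_one_pow_gammaMeasure hId_pos hμd L
  have hM : 0 ≤ ∫ x, (x + 1) ∂gammaMeasure Ir μr :=
    integral_nonneg_of_ae (by filter_upwards [hXr_nonneg] with x hx; positivity)
  have hlim := tendsto_pow_mul_outageIntegral hu.le hXr_nonneg hXd_nonneg
    (by simpa using integrable_add_one_pow_gammaMeasure hIr_pos hμr 1) hmoments
  refine ⟨hlim.congr' ?_, mul_pos (pow_pos hu K)
    (sum_choose_mul_integral_add_one_pow_pos hM hXd_nonneg hmoments)⟩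
  filter_upwards [eventually_gt_atTop 0] with ρ hρ
  rw [← measureReal_def, measureReal_outage_eq_outageIntegral hρ hu.le (hWmeas ρ hρ)
    (hXmeas ρ hρ) (hVmeas ρ hρ) (hXdmeas ρ hρ) (hindep ρ hρ) hXr_nonneg hXd_nonneg (hWdist ρ hρ)
    (hXdist ρ hρ) (hVdist ρ hρ) (hXddist ρ hρ)]

/-- Diversity order for `N = 1`: with all intended channels exponential with rate
`1/ρ`, relay interference `X_k ~ Gamma(I_r, μ_r)`, destination interference
`X_d ~ Gamma(I_d, μ_d)`, all mutually independent, the outage probability satisfies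
`lim_{ρ→∞} ρ^K P_out(ρ) = u^K Σ_{L=0}^{K} C(K,L) (E[X_1+1])^{K-L} E[(X_d+1)^L]`,
a finite positive constant, so the diversity order is `K`. -/
theorem diversity_order_N_eq_one
    {Ω : Type*} [MeasurableSpace Ω] (P : Measure Ω) [IsProbabilityMeasure P]
    (K : ℕ) (hK : 1 ≤ K) (Ir : ℕ) (hIr : 1 ≤ Ir) (Id' : ℕ) (hId : 1 ≤ Id')
    (μr μd u : ℝ) (hμr : 0 < μr) (hμd : 0 < μd) (hu : 0 < u)
    (W V : ℝ → Fin K → Ω → ℝ) (X : ℝ → Fin K → Ω → ℝ) (Xd : ℝ → Ω → ℝ)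
    (hWmeas : ∀ ρ, 0 < ρ → ∀ k, Measurable (W ρ k))
    (hXmeas : ∀ ρ, 0 < ρ → ∀ k, Measurable (X ρ k))
    (hVmeas : ∀ ρ, 0 < ρ → ∀ k, Measurable (V ρ k))
    (hXdmeas : ∀ ρ, 0 < ρ → Measurable (Xd ρ))
    (hWdist : ∀ ρ, 0 < ρ → ∀ k, Measure.map (W ρ k) P = expMeasure (1 / ρ))
    (hXdist : ∀ ρ, 0 < ρ → ∀ k, Measure.map (X ρ k) P = gammaMeasure Ir μr)
    (hVdist : ∀ ρ, 0 < ρ → ∀ k, Measure.map (V ρ k) P = expMeasure (1 / ρ))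
    (hXddist : ∀ ρ, 0 < ρ → Measure.map (Xd ρ) P = gammaMeasure Id' μd)
    (hindep : ∀ ρ, 0 < ρ → iIndepFun
      (Sum.elim (Sum.elim (W ρ) (X ρ)) (Sum.elim (V ρ) (fun _ : Unit => Xd ρ))) P) :
    Filter.Tendsto
      (fun ρ : ℝ => ρ ^ K *
        (P {ω | ∀ k, u ≤ W ρ k ω / (X ρ k ω + 1) → V ρ k ω < u * (Xd ρ ω + 1)}).toReal)
      Filter.atTop
      (nhds (u ^ K * ∑ L ∈ Finset.range (K + 1), (K.choose L : ℝ) *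
        (∫ x, (x + 1) ∂gammaMeasure Ir μr) ^ (K - L) *
          ∫ x, (x + 1) ^ L ∂gammaMeasure Id' μd)) ∧
    0 < u ^ K * ∑ L ∈ Finset.range (K + 1), (K.choose L : ℝ) *
        (∫ x, (x + 1) ∂gammaMeasure Ir μr) ^ (K - L) *
          ∫ x, (x + 1) ^ L ∂gammaMeasure Id' μd :=
  diversity_order_N_eq_one_general P K Ir hIr Id' hId μr μd u hμr hμd hu W V X Xd hWmeas hXmeas
    hVmeas hXdmeas hWdist hXdist hVdist hXddist hindep
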